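/- For a system of p qubits (all nᵢ = 2): if k·(1 + 2p) < 2^{2p}, then Σ_pure^k(2,…,2) has (4^p − 1)-dimensional Hausdorff measure zero in the space of I×I complex matrices, I = Fin p → Fin 2. In particular, the optimal pure state ensemble length of a random separable p-qubit state is almost always at least 2^{2p}/(1+2p), which is nearly the square of the maximal rank. -/

import Mathlib

open scoped ComplexOrder
open MeasureTheory

/-- A density matrix: positive semidefinite (hence Hermitian) with trace 1. -/
def IsDensityMatrix {m : Type*} [Fintype m] [DecidableEq m] (A : Matrix m m ℂ) : Prop :=
  A.PosSemidef ∧ A.trace = 1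

/-- A pure density matrix: a density matrix of rank one. -/
def IsPureDensityMatrix {m : Type*} [Fintype m] [DecidableEq m] (A : Matrix m m ℂ) : Prop :=
  IsDensityMatrix A ∧ A.rank = 1

/-- Tensor (Kronecker) product of the matrices `B i` over all `p` particles. -/
def prodMat {p : ℕ} (n : Fin p → ℕ) (B : ∀ i, Matrix (Fin (n i)) (Fin (n i)) ℂ) :
    Matrix (∀ i, Fin (n i)) (∀ i, Fin (n i)) ℂ :=
  fun x y => ∏ i, B i (x i) (y i)

/-- `Σ^k(n₁,…,n_p)`: separable states of ensemble length at most `k`. -/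
def SigmaK {p : ℕ} (n : Fin p → ℕ) (k : ℕ) :
    Set (Matrix (∀ i, Fin (n i)) (∀ i, Fin (n i)) ℂ) :=
  {A | ∃ (l : Fin k → ℝ) (B : Fin k → ∀ i, Matrix (Fin (n i)) (Fin (n i)) ℂ),
    (∀ j, 0 ≤ l j) ∧ (∑ j, l j) = 1 ∧ (∀ j i, IsDensityMatrix (B j i)) ∧
    A = ∑ j, l j • prodMat n (B j)}

/-- `Σ_pure^k(n₁,…,n_p)`: separable states of pure-state ensemble length at most `k`. -/
def SigmaPureK {p : ℕ} (n : Fin p → ℕ) (k : ℕ) :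
    Set (Matrix (∀ i, Fin (n i)) (∀ i, Fin (n i)) ℂ) :=
  {A | ∃ (l : Fin k → ℝ) (B : Fin k → ∀ i, Matrix (Fin (n i)) (Fin (n i)) ℂ),
    (∀ j, 0 ≤ l j) ∧ (∑ j, l j) = 1 ∧ (∀ j i, IsPureDensityMatrix (B j i)) ∧
    A = ∑ j, l j • prodMat n (B j)}

noncomputable instance {m : Type*} [Fintype m] : NormedAddCommGroup (Matrix m m ℂ) :=
  Matrix.normedAddCommGroup

noncomputable instance {m : Type*} [Fintype m] : MeasurableSpace (Matrix m m ℂ) := borel _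

instance {m : Type*} [Fintype m] :
    @BorelSpace (Matrix m m ℂ) (PseudoMetricSpace.toUniformSpace (α := Matrix m m ℂ)).toTopologicalSpace _ := ⟨rfl⟩

noncomputable instance {m : Type*} [Fintype m] : NormedSpace ℝ (Matrix m m ℂ) :=
  Matrix.normedSpace

open scoped NNReal ENNReal

/-- The two standard charts covering the pure qubit density matrices.  `psiMat false` is the
(inverse) stereographic chart coming from the unit vector `(1, u₁ + u₂ i)` (normalized), and
`psiMat true` is the single remaining state `|1⟩⟨1|`. -/
noncomputable def psiMat : Bool → ℝ × ℝ → Matrix (Fin 2) (Fin 2) ℂ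
  | true, _ => !![0, 0; 0, 1]
  | false, u =>
      (1 / (1 + u.1 ^ 2 + u.2 ^ 2) : ℝ) •
        !![1, (u.1 : ℂ) - u.2 * Complex.I;
           (u.1 : ℂ) + u.2 * Complex.I, (u.1 : ℂ) ^ 2 + (u.2 : ℂ) ^ 2]

/-- Every pure qubit density matrix lies on one of the two charts. -/
lemma isPure_eq_psiMat {A : Matrix (Fin 2) (Fin 2) ℂ} (hA : IsPureDensityMatrix A) :
    ∃ b u, A = psiMat b u := by
  obtain ⟨⟨hpsd, htr⟩, hrk⟩ := hA
  have hherm : A.IsHermitian := hpsd.1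
  have h01 : A 0 1 = starRingEnd ℂ (A 1 0) := (hherm.apply 0 1).symm
  have htr2 : A 0 0 + A 1 1 = 1 := by rw [← Matrix.trace_fin_two]; exact htr
  have hdet : A.det = 0 := by
    by_contra h
    have h2 : A.rank = 2 := by
      simpa using A.rank_of_isUnit ((Matrix.isUnit_iff_isUnit_det A).mpr
        (isUnit_iff_ne_zero.mpr h))
    omega
  have hdet2 : A 0 0 * A 1 1 - A 0 1 * A 1 0 = 0 := by
    rw [← Matrix.det_fin_two]; exact hdet
  have h00 : starRingEnd ℂ (A 0 0) = A 0 0 := hherm.apply 0 0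
  by_cases hc : A 0 0 = 0
  · have hγ : A 1 0 = 0 := by
      have h1 : A 0 1 * A 1 0 = 0 := by linear_combination -hdet2 + (A 1 1) * hc
      rcases mul_eq_zero.mp h1 with h | h
      · rw [h01] at h; simpa using h
      · exact h
    refine ⟨true, (0, 0), ?_⟩
    have h11 : A 1 1 = 1 := by linear_combination htr2 - hc
    rw [Matrix.eta_fin_two A, hc, h11, hγ, h01, hγ]
    simp [psiMat]
  · have ha : A 0 0 = (((A 0 0).re : ℂ)) := (Complex.conj_eq_iff_re.mp h00).symm
    set a : ℝ := (A 0 0).re with hadef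
    set r : ℝ := (A 1 0).re with hrdef
    set m : ℝ := (A 1 0).im with hmdef
    have ha0 : (a : ℂ) ≠ 0 := by rw [← ha]; exact hc
    have haR : a ≠ 0 := fun h => ha0 (by exact_mod_cast h)
    have hγ10 : A 1 0 = (r : ℂ) + (m : ℂ) * Complex.I := (Complex.re_add_im (A 1 0)).symm
    have hγ01 : A 0 1 = (r : ℂ) - (m : ℂ) * Complex.I := by
      rw [h01]
      apply Complex.ext <;> simp [hrdef, hmdef]
    refine ⟨false, (r / a, m / a), ?_⟩
    have F4 : (r : ℂ) ^ 2 + (m : ℂ) ^ 2 = (a : ℂ) * A 1 1 := by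
      linear_combination -hdet2 + A 1 1 * ha - A 1 0 * hγ01 -
        ((r:ℂ) - (m:ℂ) * Complex.I) * hγ10 + (m:ℂ)^2 * Complex.I_sq
    have hA11 : A 1 1 = ((1 - a : ℝ) : ℂ) := by push_cast; linear_combination htr2 - ha
    have hF4R : r ^ 2 + m ^ 2 = a * (1 - a) := by
      have : ((r ^ 2 + m ^ 2 : ℝ) : ℂ) = ((a * (1 - a) : ℝ) : ℂ) := by
        push_cast
        rw [F4, hA11]; push_cast; ring
      exact_mod_cast this
    have hscalR : 1 / (1 + (r/a) ^ 2 + (m/a) ^ 2) = a := by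
      rw [div_eq_iff (by positivity)]
      field_simp
      linear_combination -hF4R
    rw [Matrix.eta_fin_two A]
    ext i j
    fin_cases i <;> fin_cases j <;>
      simp only [psiMat, Matrix.smul_apply, Matrix.cons_val', Matrix.cons_val_zero,
        Matrix.cons_val_one, Matrix.head_cons, Matrix.head_fin_const, Matrix.empty_val',
        Matrix.cons_val_fin_one, Complex.real_smul, Fin.mk_zero, Fin.mk_one,
        Matrix.of_apply] <;>
      rw [hscalR]
    · rw [mul_one]; exact ha
    · rw [hγ01]; push_cast; field_simp
    · rw [hγ10]; push_cast; field_simp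
    · rw [hA11]; push_cast; field_simp
      linear_combination (norm := (push_cast; ring1)) -F4 - (a:ℂ) * hA11

/-- Entrywise smoothness criterion for matrix-valued maps. -/
lemma contDiff_matrix {E : Type*} [NormedAddCommGroup E] [NormedSpace ℝ E]
    {m : Type*} [Fintype m] [DecidableEq m] {f : E → Matrix m m ℂ}
    (h : ∀ x y, ContDiff ℝ 1 fun v => f v x y) : ContDiff ℝ 1 f := by
  have hf : f = fun v => ∑ x : m, ∑ y : m,
      ((f v x y).re • Matrix.single x y (1 : ℂ) +
       (f v x y).im • Matrix.single x y Complex.I) := by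
    funext v
    conv_lhs => rw [Matrix.matrix_eq_sum_single (f v)]
    refine Finset.sum_congr rfl fun x _ => Finset.sum_congr rfl fun y _ => ?_
    rw [Matrix.smul_single, Matrix.smul_single, ← Matrix.single_add]
    congr 1
    simp [Complex.real_smul]
  rw [hf]
  refine ContDiff.sum fun x _ => ContDiff.sum fun y _ => ContDiff.add ?_ ?_
  · exact (Complex.reCLM.contDiff.comp (h x y)).smul contDiff_const
  · exact (Complex.imCLM.contDiff.comp (h x y)).smul contDiff_const

lemma contDiff_psiMat_entry (b : Bool) (x y : Fin 2) :
    ContDiff ℝ 1 fun u : ℝ × ℝ => psiMat b u x y := by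
  cases b
  · have hden : ∀ u : ℝ × ℝ, 1 + u.1 ^ 2 + u.2 ^ 2 ≠ 0 := fun u => by positivity
    have hs : ContDiff ℝ 1 fun u : ℝ × ℝ => 1 / (1 + u.1 ^ 2 + u.2 ^ 2) :=
      contDiff_const.div ((contDiff_const.add (contDiff_fst.pow 2)).add (contDiff_snd.pow 2)) hden
    have h1 : ContDiff ℝ 1 fun u : ℝ × ℝ => ((u.1 : ℂ)) :=
      Complex.ofRealCLM.contDiff.comp contDiff_fst
    have h2 : ContDiff ℝ 1 fun u : ℝ × ℝ => ((u.2 : ℂ)) :=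
      Complex.ofRealCLM.contDiff.comp contDiff_snd
    fin_cases x <;> fin_cases y <;>
      simp only [psiMat, Matrix.smul_apply, Matrix.cons_val', Matrix.cons_val_zero,
        Matrix.cons_val_one, Matrix.head_cons, Matrix.head_fin_const, Matrix.empty_val',
        Matrix.cons_val_fin_one, Fin.mk_zero, Fin.mk_one, Matrix.of_apply]
    · exact hs.smul contDiff_const
    · exact hs.smul (h1.sub (h2.mul contDiff_const))
    · exact hs.smul (h1.add (h2.mul contDiff_const))
    · exact hs.smul ((h1.pow 2).add (h2.pow 2))
  · simp only [psiMat]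
    exact contDiff_const

lemma contDiff_coeff (k' : ℕ) (j : Fin (k' + 1)) :
    ContDiff ℝ 1 fun w : Fin k' → ℝ => (Fin.snoc w (1 - ∑ m, w m) : Fin (k'+1) → ℝ) j := by
  induction j using Fin.lastCases with
  | last =>
      simp only [Fin.snoc_last]
      exact contDiff_const.sub (ContDiff.sum fun m _ => (contDiff_pi.mp contDiff_id) m)
  | cast m =>
      simp only [Fin.snoc_castSucc]
      exact (contDiff_pi.mp contDiff_id) m

/-- The parametrization of (a superset of) `Σ_pure^k(2,…,2)` associated to a pattern `ε` of
chart choices. -/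
noncomputable def Phi (p k' : ℕ) (ε : Fin (k' + 1) → Fin p → Bool)
    (v : (Fin k' → ℝ) × (Fin (k' + 1) → Fin p → ℝ × ℝ)) :
    Matrix (∀ i : Fin p, Fin 2) (∀ i : Fin p, Fin 2) ℂ :=
  ∑ j, (Fin.snoc v.1 (1 - ∑ m, v.1 m) : Fin (k'+1) → ℝ) j •
    prodMat (fun _ : Fin p => 2) (fun i => psiMat (ε j i) (v.2 j i))

lemma contDiff_Phi (p k' : ℕ) (ε : Fin (k' + 1) → Fin p → Bool) :
    ContDiff ℝ 1 (Phi p k' ε) := by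
  apply contDiff_matrix
  intro x y
  have hrw : ∀ v : (Fin k' → ℝ) × (Fin (k' + 1) → Fin p → ℝ × ℝ),
      Phi p k' ε v x y = ∑ j, ((Fin.snoc v.1 (1 - ∑ m, v.1 m) : Fin (k'+1) → ℝ) j) •
        ∏ i, psiMat (ε j i) (v.2 j i) (x i) (y i) := by
    intro v
    simp [Phi, prodMat, Matrix.sum_apply, Matrix.smul_apply]
  simp only [hrw]
  refine ContDiff.sum fun j _ => ContDiff.fun_smul ?_ ?_
  · exact (contDiff_coeff k' j).comp contDiff_fst
  · refine contDiff_prod fun i _ => ?_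
    exact (contDiff_psiMat_entry (ε j i) (x i) (y i)).comp
      ((contDiff_pi.mp ((contDiff_pi.mp contDiff_snd) j)) i)

lemma sigmaPureK_subset_iUnion_range (p k' : ℕ) :
    SigmaPureK (fun _ : Fin p => 2) (k' + 1) ⊆
      ⋃ ε : Fin (k' + 1) → Fin p → Bool, Set.range (Phi p k' ε) := by
  rintro A ⟨l, B, h0, h1, hpure, rfl⟩
  choose ε u hu using fun j i => isPure_eq_psiMat (hpure j i)
  refine Set.mem_iUnion.mpr ⟨ε, ⟨(fun m => l m.castSucc, u), ?_⟩⟩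
  have hl : (Fin.snoc (fun m : Fin k' => l m.castSucc) (1 - ∑ m : Fin k', l m.castSucc) :
      Fin (k'+1) → ℝ) = l := by
    funext j
    induction j using Fin.lastCases with
    | last =>
        rw [Fin.snoc_last]
        rw [Fin.sum_univ_castSucc] at h1
        linarith
    | cast m => rw [Fin.snoc_castSucc]
  simp only [Phi]
  refine Finset.sum_congr rfl fun j _ => ?_
  rw [congrFun hl j]
  have hB : (fun i => psiMat (ε j i) (u j i)) = B j := funext fun i => (hu j i).symm
  rw [hB]

/-- for `p` qubits, if `k·(1 + 2p) < 2^(2p)` then `Σ_pure^k(2,…,2)` has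
`(4^p - 1)`-dimensional Hausdorff measure zero. -/
theorem sigmaPureK_qubits_measure_zero (p k : ℕ) (hk : k * (1 + 2 * p) < 2 ^ (2 * p)) :
    μH[(4 : ℝ) ^ p - 1] (SigmaPureK (fun _ : Fin p => 2) k) = 0 := by
  obtain _ | k' := k
  · have he : SigmaPureK (fun _ : Fin p => 2) 0 = ∅ := by
      ext A
      simp only [SigmaPureK, Set.mem_setOf_eq, Set.mem_empty_iff_false, iff_false, not_exists]
      rintro l B ⟨-, h1, -, -⟩
      simp at h1
    rw [he]
    exact measure_empty
  · refine measure_mono_null (sigmaPureK_subset_iUnion_range p k')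
      (measure_iUnion_null fun ε => ?_)
    have h1le : (1 : ℝ≥0) ≤ 4 ^ p := one_le_pow₀ (by norm_num)
    have hco : (((4 : ℝ≥0) ^ p - 1 : ℝ≥0) : ℝ) = (4 : ℝ) ^ p - 1 := by
      rw [NNReal.coe_sub h1le]
      push_cast
      ring
    rw [← hco]
    apply hausdorffMeasure_of_dimH_lt
    have hd := (contDiff_Phi p k' ε).dimH_range_le
    refine lt_of_le_of_lt hd ?_
    have hrank : Module.finrank ℝ ((Fin k' → ℝ) × (Fin (k' + 1) → Fin p → ℝ × ℝ)) =
        k' + (k' + 1) * (p * 2) := by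
      simp [Module.finrank_prod, Module.finrank_pi_fintype, Finset.sum_const]
    rw [hrank]
    have hnat : k' + (k' + 1) * (p * 2) + 2 ≤ 4 ^ p := by
      have h4 : 2 ^ (2 * p) = 4 ^ p := by rw [pow_mul]; norm_num
      rw [h4] at hk
      calc k' + (k' + 1) * (p * 2) + 2 = (k' + 1) * (1 + 2 * p) + 1 := by ring
        _ ≤ 4 ^ p := hk
    have hR : ((k' + (k' + 1) * (p * 2) : ℕ) : ℝ) < (4 : ℝ) ^ p - 1 := by
      have : ((k' + (k' + 1) * (p * 2) : ℕ) : ℝ) + 2 ≤ ((4 ^ p : ℕ) : ℝ) := by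
        exact_mod_cast hnat
      push_cast at this ⊢
      linarith
    have hNN : ((k' + (k' + 1) * (p * 2) : ℕ) : ℝ≥0) < (4 : ℝ≥0) ^ p - 1 := by
      rw [← NNReal.coe_lt_coe, hco]
      simpa using hR
    exact_mod_cast hNN
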